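/- arXiv:0909.0528 — 4 statements merged into one kernel-verified Lean document; each statement's English description precedes it below -/
import Mathlib

section
/- Fix λ > 0 and define f : ℝ → ℝ by f(θ₀) = cosh(√(λ/2)·e^{θ₀/2}) - e^{θ₀/2}. There exists a critical value λ_c > 0, characterized by 1 = √(λ_c/2)·sinh(√((λ_c+2)/2)), such that: if λ > λ_c then f has no zero; if λ = λ_c then f has exactly one zero; and if 0 < λ < λ_c then f has exactly two zeros. -/
/-!
Substituting `u = exp (θ₀ / 2)` and `s = √(λ / 2)`, the zeros of `f` are the zeros of the
strictly convex function `g_s u = cosh (s u) - u`, which has at most two zeros and, for `u > 0`,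
increases strictly with `s`. The characterization of `λ_c = 2 s_c²` says exactly that the graph
of `cosh (s_c u)` touches the diagonal at `u_c = √(s_c² + 1) / s_c`: there `cosh (s_c u_c) = u_c`
and `s_c sinh (s_c u_c) = 1`. Hence `g_{s_c} ≥ 0` vanishes only at `u_c`, `g_s > 0` for
`s > s_c`, and for `s < s_c` the sign pattern `g_s 0 = 1`, `g_s u_c < 0`, `g_s u → ∞` yields
two zeros.
-/

open Real Set

theorem StrictConvexOn.lt_of_hasDerivAt_eq_zero {S : Set ℝ} {f : ℝ → ℝ} {x y : ℝ}
    (hf : StrictConvexOn ℝ S f) (hx : x ∈ S) (hy : y ∈ S) (hf' : HasDerivAt f 0 x)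
    (hxy : y ≠ x) : f x < f y := by
  rcases hxy.lt_or_gt with h | h
  · have := hf.slope_lt_of_hasDerivAt hy hx h hf'
    rw [slope_def_field, div_neg_iff] at this
    rcases this with ⟨-, h'⟩ | ⟨h', -⟩ <;> linarith
  · have := hf.lt_slope_of_hasDerivAt hx hy h hf'
    rw [slope_def_field, div_pos_iff] at this
    rcases this with ⟨h', -⟩ | ⟨-, h'⟩ <;> linarith

theorem StrictConvexOn.eq_or_eq_of_apply_eq {S : Set ℝ} {f : ℝ → ℝ} {a b c : ℝ}
    (hf : StrictConvexOn ℝ S f) (ha : a ∈ S) (hb : b ∈ S) (hc : c ∈ S) (hab : a < b)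
    (hfab : f a = f b) (hfc : f c = f a) : c = a ∨ c = b := by
  have lt_max {x y z : ℝ} (hx : x ∈ S) (hz : z ∈ S) (hxy : x < y) (hyz : y < z) :
      f y < max (f x) (f z) :=
    hf.lt_on_openSegment hx hz (hxy.trans hyz).ne
      (by rw [openSegment_eq_Ioo (hxy.trans hyz)]; exact ⟨hxy, hyz⟩)
  by_contra! hne
  rcases lt_or_gt_of_ne hne.1 with hca | hac
  · have := lt_max hc hb hca hab
    simp [hfc, hfab] at this
  rcases lt_or_gt_of_ne hne.2 with hcb | hbc
  · have := lt_max ha hb hac hcb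
    simp [hfc, hfab] at this
  · have := lt_max ha hc hab hbc
    simp [hfc, hfab] at this

theorem Real.exp_half_eq_iff {θ u : ℝ} (hu : 0 < u) : exp (θ / 2) = u ↔ θ = 2 * log u := by
  rw [← exp_log hu, exp_eq_exp, log_exp]
  constructor <;> intro h <;> linarith

noncomputable def coshGap (s u : ℝ) : ℝ := cosh (s * u) - u

theorem hasDerivAt_coshGap (s u : ℝ) : HasDerivAt (coshGap s) (s * sinh (s * u) - 1) u := by
  have hlin : HasDerivAt (fun v => s * v) s u := by simpa using (hasDerivAt_id u).const_mul s
  exact (hlin.cosh.sub (hasDerivAt_id u)).congr_deriv (by ring)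

theorem continuous_coshGap (s : ℝ) : Continuous (coshGap s) :=
  continuous_iff_continuousAt.2 fun u => (hasDerivAt_coshGap s u).continuousAt

theorem strictConvexOn_coshGap {s : ℝ} (hs : 0 < s) : StrictConvexOn ℝ univ (coshGap s) := by
  have hderiv : deriv (coshGap s) = fun u => s * sinh (s * u) - 1 :=
    funext fun u => (hasDerivAt_coshGap s u).deriv
  refine StrictMono.strictConvexOn_univ_of_deriv (continuous_coshGap s) ?_
  rw [hderiv]
  exact fun u v huv =>
    sub_lt_sub_right (mul_lt_mul_of_pos_left (sinh_strictMono (mul_lt_mul_of_pos_left huv hs)) hs) 1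

theorem coshGap_pos_of_nonpos (s : ℝ) {u : ℝ} (hu : u ≤ 0) : 0 < coshGap s u := by
  have := one_le_cosh (s * u)
  rw [coshGap]
  linarith

theorem coshGap_lt_coshGap {s s' u : ℝ} (hs : 0 ≤ s) (hss' : s < s') (hu : 0 < u) :
    coshGap s u < coshGap s' u := by
  have : cosh (s * u) < cosh (s' * u) := by
    rw [cosh_lt_cosh, abs_of_nonneg (mul_nonneg hs hu.le),
      abs_of_nonneg (mul_nonneg (hs.trans hss'.le) hu.le)]
    exact mul_lt_mul_of_pos_right hss' hu
  rw [coshGap, coshGap]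
  linarith

theorem exists_gt_coshGap_pos {s : ℝ} (hs : 0 < s) (v : ℝ) :
    ∃ U, v < U ∧ 0 < coshGap s U := by
  set U := |v| + 4 / s ^ 2
  have hU : 4 ≤ s ^ 2 * U := by
    have : s ^ 2 * (4 / s ^ 2) = 4 := by field_simp
    nlinarith [abs_nonneg v, sq_nonneg s]
  refine ⟨U, by linarith [le_abs_self v, show 0 < 4 / s ^ 2 by positivity], ?_⟩
  have hx : 0 ≤ s * U := mul_nonneg hs.le (add_nonneg (abs_nonneg v) (by positivity))
  have hcosh : (s * U) ^ 2 / 4 < cosh (s * U) := by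
    rw [cosh_eq]
    nlinarith [quadratic_le_exp_of_nonneg hx, exp_pos (-(s * U))]
  rw [coshGap]
  nlinarith

def IsCriticalSlope (c : ℝ) : Prop := 0 < c ∧ c * sinh √(c ^ 2 + 1) = 1

noncomputable def tangencyPoint (c : ℝ) : ℝ := √(c ^ 2 + 1) / c

theorem exists_isCriticalSlope : ∃ c, IsCriticalSlope c := by
  have hcont : Continuous fun c : ℝ => c * sinh √(c ^ 2 + 1) := by fun_prop
  have hsqrt : 1 < √(1 ^ 2 + 1 : ℝ) := by rw [lt_sqrt zero_le_one]; norm_num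
  have h1 : (1 : ℝ) ∈ Ioo (0 * sinh √(0 ^ 2 + 1)) (1 * sinh √(1 ^ 2 + 1)) := by
    refine ⟨by simp, ?_⟩
    rw [one_mul]
    exact hsqrt.trans (self_lt_sinh_iff.2 (zero_lt_one.trans hsqrt))
  obtain ⟨c, hc, hc1⟩ := intermediate_value_Ioo zero_le_one hcont.continuousOn h1
  exact ⟨c, hc.1, hc1⟩

namespace IsCriticalSlope

variable {c : ℝ}

theorem tangencyPoint_pos (hc : IsCriticalSlope c) : 0 < tangencyPoint c :=
  div_pos (sqrt_pos.2 (by positivity)) hc.1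

theorem mul_tangencyPoint (hc : IsCriticalSlope c) : c * tangencyPoint c = √(c ^ 2 + 1) :=
  mul_div_cancel₀ _ hc.1.ne'

theorem coshGap_tangencyPoint (hc : IsCriticalSlope c) : coshGap c (tangencyPoint c) = 0 := by
  have hsinh : sinh √(c ^ 2 + 1) = 1 / c := by rw [eq_div_iff hc.1.ne', mul_comm, hc.2]
  rw [coshGap, hc.mul_tangencyPoint, sub_eq_zero,
    ← pow_left_inj₀ (cosh_pos _).le hc.tangencyPoint_pos.le two_ne_zero, tangencyPoint, cosh_sq,
    hsinh, div_pow, div_pow, sq_sqrt (by positivity)]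
  field_simp [hc.1.ne']
  ring

theorem hasDerivAt_coshGap_tangencyPoint (hc : IsCriticalSlope c) :
    HasDerivAt (coshGap c) 0 (tangencyPoint c) :=
  (hasDerivAt_coshGap _ _).congr_deriv (by rw [hc.mul_tangencyPoint, hc.2, sub_self])

theorem coshGap_pos_of_ne (hc : IsCriticalSlope c) {u : ℝ} (hu : u ≠ tangencyPoint c) :
    0 < coshGap c u := by
  have := (strictConvexOn_coshGap hc.1).lt_of_hasDerivAt_eq_zero trivial trivial
    hc.hasDerivAt_coshGap_tangencyPoint hu
  rwa [hc.coshGap_tangencyPoint] at this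

theorem coshGap_eq_zero_iff (hc : IsCriticalSlope c) {u : ℝ} :
    coshGap c u = 0 ↔ u = tangencyPoint c := by
  refine ⟨fun hu => ?_, fun hu => hu ▸ hc.coshGap_tangencyPoint⟩
  by_contra hne
  exact (hc.coshGap_pos_of_ne hne).ne' hu

theorem coshGap_nonneg (hc : IsCriticalSlope c) (u : ℝ) : 0 ≤ coshGap c u := by
  rcases eq_or_ne u (tangencyPoint c) with rfl | hu
  · exact hc.coshGap_tangencyPoint.ge
  · exact (hc.coshGap_pos_of_ne hu).le

theorem coshGap_pos_of_lt (hc : IsCriticalSlope c) {s : ℝ} (hcs : c < s) (u : ℝ) :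
    0 < coshGap s u := by
  rcases le_or_gt u 0 with hu | hu
  · exact coshGap_pos_of_nonpos s hu
  · exact (hc.coshGap_nonneg u).trans_lt (coshGap_lt_coshGap hc.1.le hcs hu)

theorem exists_coshGap_eq_zero_iff_of_lt (hc : IsCriticalSlope c) {s : ℝ} (hs : 0 < s)
    (hsc : s < c) : ∃ a b, 0 < a ∧ a < b ∧ ∀ u, coshGap s u = 0 ↔ u = a ∨ u = b := by
  set u₀ := tangencyPoint c
  have hneg : coshGap s u₀ < 0 :=
    hc.coshGap_tangencyPoint ▸ coshGap_lt_coshGap hs.le hsc hc.tangencyPoint_pos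
  obtain ⟨U, hU, hpos⟩ := exists_gt_coshGap_pos hs u₀
  obtain ⟨a, ⟨ha0, hau⟩, ha⟩ := intermediate_value_Ioo' hc.tangencyPoint_pos.le
    (continuous_coshGap s).continuousOn ⟨hneg, coshGap_pos_of_nonpos s le_rfl⟩
  obtain ⟨b, ⟨hub, -⟩, hb⟩ := intermediate_value_Ioo hU.le
    (continuous_coshGap s).continuousOn ⟨hneg, hpos⟩
  refine ⟨a, b, ha0, hau.trans hub, fun u => ⟨fun hu => ?_, ?_⟩⟩
  · exact (strictConvexOn_coshGap hs).eq_or_eq_of_apply_eq trivial trivial trivial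
      (hau.trans hub) (ha.trans hb.symm) (hu.trans ha.symm)
  · rintro (rfl | rfl) <;> assumption

end IsCriticalSlope

theorem critical_lambda_zero_count (lam : ℝ) (hlam : 0 < lam) :
    let f : ℝ → ℝ := fun θ₀ =>
      Real.cosh (Real.sqrt (lam / 2) * Real.exp (θ₀ / 2)) - Real.exp (θ₀ / 2)
    ∃ lamc : ℝ, 0 < lamc ∧
      1 = Real.sqrt (lamc / 2) * Real.sinh (Real.sqrt ((lamc + 2) / 2)) ∧
      (lamc < lam → ∀ θ₀ : ℝ, f θ₀ ≠ 0) ∧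
      (lam = lamc → ∃! θ₀ : ℝ, f θ₀ = 0) ∧
      (lam < lamc → ∃ a b : ℝ, a ≠ b ∧ f a = 0 ∧ f b = 0 ∧
        ∀ c : ℝ, f c = 0 → c = a ∨ c = b) := by
  intro f
  have hf (θ : ℝ) : f θ = coshGap √(lam / 2) (exp (θ / 2)) := rfl
  obtain ⟨c, hc⟩ := exists_isCriticalSlope
  have hsqrt : √(2 * c ^ 2 / 2) = c := by
    rw [mul_div_cancel_left₀ _ two_ne_zero, sqrt_sq hc.1.le]
  refine ⟨2 * c ^ 2, mul_pos two_pos (pow_pos hc.1 2), ?_, fun hlt θ => ?_, fun heq => ?_,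
    fun hlt => ?_⟩
  · rw [hsqrt, show (2 * c ^ 2 + 2) / 2 = c ^ 2 + 1 by ring, hc.2]
  · exact (hc.coshGap_pos_of_lt ((lt_sqrt hc.1.le).2 (by linarith)) _).ne'
  · have hzero (θ : ℝ) : f θ = 0 ↔ θ = 2 * log (tangencyPoint c) := by
      rw [hf, heq, hsqrt, hc.coshGap_eq_zero_iff, exp_half_eq_iff hc.tangencyPoint_pos]
    exact ⟨_, (hzero _).2 rfl, fun θ => (hzero θ).1⟩
  · obtain ⟨a, b, ha, hab, hzero⟩ := hc.exists_coshGap_eq_zero_iff_of_lt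
      (sqrt_pos.2 (half_pos hlam)) ((sqrt_lt' hc.1).2 (by linarith))
    have hzero' (θ : ℝ) : f θ = 0 ↔ θ = 2 * log a ∨ θ = 2 * log b := by
      rw [hf, hzero, exp_half_eq_iff ha, exp_half_eq_iff (ha.trans hab)]
    refine ⟨_, _, ?_, (hzero' _).2 (.inl rfl), (hzero' _).2 (.inr rfl), fun θ => (hzero' θ).1⟩
    exact (by linarith [log_lt_log ha hab] : 2 * log a < 2 * log b).ne
end

section
/- Let δ > 0 and φ₀ ∈ ℝ, and define φ(x) = φ₀ + 2·ln(cosh(√(δ/2)·e^{-φ₀/2}·x)). Then φ satisfies φ''(x) = δ·e^{-φ(x)} for all x ∈ ℝ, with φ(0) = φ₀ and φ'(0) = 0. -/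
/-! For `f = c + 2 log cosh (a x)` one has `f' = 2a tanh (a x)` and, since `cosh² - sinh² = 1`,
`f'' = 2a² / cosh² (a x) = 2a² e^c e^{-f}`. The choice `a = √(δ/2) e^{-φ₀/2}` makes `2a² e^{φ₀} = δ`. -/

open Real

namespace Real

theorem hasDerivAt_tanh (x : ℝ) : HasDerivAt tanh (1 / cosh x ^ 2) x := by
  rw [show tanh = fun y => sinh y / cosh y from funext tanh_eq_sinh_div_cosh]
  refine ((hasDerivAt_sinh x).div (hasDerivAt_cosh x) (cosh_pos x).ne').congr_deriv ?_
  rw [← cosh_sq_sub_sinh_sq x]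
  ring

theorem hasDerivAt_log_cosh (x : ℝ) : HasDerivAt (fun y => log (cosh y)) (tanh x) x := by
  simpa only [tanh_eq_sinh_div_cosh] using (hasDerivAt_cosh x).log (cosh_pos x).ne'

theorem exp_neg_two_mul_log_cosh (x : ℝ) : exp (-(2 * log (cosh x))) = 1 / cosh x ^ 2 := by
  have h_log : 2 * log (cosh x) = log (cosh x ^ 2) := by simp [log_pow]
  rw [h_log, exp_neg, exp_log (by positivity), one_div]

end Real

section LogCoshProfile

variable (c a : ℝ)

theorem deriv_const_add_two_mul_log_cosh :
    deriv (fun x => c + 2 * log (cosh (a * x))) = fun x => 2 * a * tanh (a * x) := by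
  funext x
  have h_inner : HasDerivAt (fun x => a * x) a x := by simpa using (hasDerivAt_id x).const_mul a
  have h : HasDerivAt (fun x => c + 2 * log (cosh (a * x))) (2 * (tanh (a * x) * a)) x :=
    (((hasDerivAt_log_cosh (a * x)).comp x h_inner).const_mul 2).const_add c
  rw [h.deriv]
  ring

theorem deriv_deriv_const_add_two_mul_log_cosh (x : ℝ) :
    deriv (deriv fun x => c + 2 * log (cosh (a * x))) x
      = 2 * a ^ 2 * exp c * exp (-(c + 2 * log (cosh (a * x)))) := by
  have h_inner : HasDerivAt (fun x => a * x) a x := by simpa using (hasDerivAt_id x).const_mul a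
  have h : HasDerivAt (fun x => 2 * a * tanh (a * x)) (2 * a * (1 / cosh (a * x) ^ 2 * a)) x :=
    ((hasDerivAt_tanh (a * x)).comp x h_inner).const_mul (2 * a)
  rw [deriv_const_add_two_mul_log_cosh, h.deriv, neg_add, exp_add, exp_neg_two_mul_log_cosh,
    exp_neg]
  field_simp

end LogCoshProfile

theorem liquid_potential_solution (δ φ₀ : ℝ) (hδ : 0 < δ) :
    let φ : ℝ → ℝ := fun x =>
      φ₀ + 2 * Real.log (Real.cosh (Real.sqrt (δ / 2) * Real.exp (-φ₀ / 2) * x))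
    (∀ x : ℝ, deriv (deriv φ) x = δ * Real.exp (-(φ x))) ∧
      φ 0 = φ₀ ∧ deriv φ 0 = 0 := by
  intro φ
  set a := √(δ / 2) * exp (-φ₀ / 2)
  have h_coeff : 2 * a ^ 2 * exp φ₀ = δ := by
    rw [mul_pow, sq_sqrt (by positivity), ← exp_nat_mul, mul_assoc, mul_assoc, ← exp_add]
    rw [show ((2 : ℕ) : ℝ) * (-φ₀ / 2) + φ₀ = 0 by ring, exp_zero]
    ring
  refine ⟨fun x => ?_, by simp [φ], ?_⟩
  · rw [deriv_deriv_const_add_two_mul_log_cosh, h_coeff]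
  · rw [deriv_const_add_two_mul_log_cosh]
    simp
end

section
/- If δ > δ_c, where δ_c is the unique positive solution of 1 = √(δ_c/2)·sinh(√((δ_c+2)/2)), then there is no φ₀ ∈ ℝ satisfying e^{-φ₀/2} = cosh(√(δ/2)·e^{-φ₀/2}). In particular the boundary value problem φ'' = δe^{-φ} on [0,1] with φ'(0) = 0 and φ(1) = 0 has no solution of the form φ(x) = φ₀ + 2·ln(cosh(√(δ/2)·e^{-φ₀/2}·x)). -/
/-!
With `a_c = √(δ_c/2)` and `t₀ = √((δ_c+2)/2)`, the characteristic equation says `a_c sinh t₀ = 1`,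
and then `(a_c cosh t₀)² = a_c² + 1 = t₀²`, so the diagonal `t ↦ t` is tangent to the convex
function `a_c cosh` at `t₀`. Hence `t ≤ a_c cosh t` everywhere, and for `δ > δ_c` even
`t < √(δ/2) cosh t`. But `u = cosh (√(δ/2) u)` would give `√(δ/2) cosh t = t` at `t = √(δ/2) u`.
-/

open Real

lemma cosh_add_sinh_mul_le_cosh_add (a x : ℝ) : cosh a + sinh a * x ≤ cosh (a + x) := by
  have h₁ := mul_nonneg (exp_pos a).le (sub_nonneg.2 (add_one_le_exp x))
  have h₂ := mul_nonneg (exp_pos (-a)).le (sub_nonneg.2 (add_one_le_exp (-x)))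
  rw [cosh_eq, sinh_eq, cosh_eq, neg_add, exp_add, exp_add]
  linarith

lemma mul_cosh_eq_of_mul_sinh_eq_one {a t : ℝ} (ha : 0 ≤ a) (ht : 0 ≤ t)
    (hsinh : a * sinh t = 1) (hsq : t ^ 2 = a ^ 2 + 1) : a * cosh t = t := by
  have hsq' : (a * cosh t) ^ 2 = t ^ 2 := by
    rw [mul_pow, cosh_sq, hsq]
    linear_combination (a * sinh t + 1) * hsinh
  exact (sq_eq_sq₀ (by positivity) ht).1 hsq'

lemma le_mul_cosh_of_tangent {a t₀ : ℝ} (ha : 0 ≤ a) (hsinh : a * sinh t₀ = 1)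
    (hcosh : a * cosh t₀ = t₀) (t : ℝ) : t ≤ a * cosh t :=
  calc t = a * cosh t₀ + a * sinh t₀ * (t - t₀) := by rw [hsinh, hcosh]; ring
    _ = a * (cosh t₀ + sinh t₀ * (t - t₀)) := by ring
    _ ≤ a * cosh (t₀ + (t - t₀)) := by gcongr; exact cosh_add_sinh_mul_le_cosh_add _ _
    _ = a * cosh t := by rw [add_sub_cancel]

lemma lt_sqrt_mul_cosh_of_critical_lt {δ δc : ℝ} (hδc : 0 ≤ δc)
    (hchar : 1 = √(δc / 2) * sinh √((δc + 2) / 2)) (hδ : δc < δ) (t : ℝ) :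
    t < √(δ / 2) * cosh t := by
  have hsq : √((δc + 2) / 2) ^ 2 = √(δc / 2) ^ 2 + 1 := by
    rw [sq_sqrt (by linarith), sq_sqrt (by linarith)]; ring
  have hcosh := mul_cosh_eq_of_mul_sinh_eq_one (sqrt_nonneg _) (sqrt_nonneg _) hchar.symm hsq
  calc t ≤ √(δc / 2) * cosh t := le_mul_cosh_of_tangent (sqrt_nonneg _) hchar.symm hcosh t
    _ < √(δ / 2) * cosh t := by gcongr

theorem no_steady_state_above_critical_general (δ δc : ℝ) (hδcpos : 0 < δc)
    (hchar : 1 = Real.sqrt (δc / 2) * Real.sinh (Real.sqrt ((δc + 2) / 2)))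
    (hδ : δc < δ) :
    (¬ ∃ φ₀ : ℝ, Real.exp (-φ₀ / 2) =
        Real.cosh (Real.sqrt (δ / 2) * Real.exp (-φ₀ / 2))) ∧
    ¬ ∃ φ₀ : ℝ,
      (∀ x : ℝ, deriv (deriv (fun y =>
          φ₀ + 2 * Real.log (Real.cosh (Real.sqrt (δ / 2) * Real.exp (-φ₀ / 2) * y)))) x =
        δ * Real.exp (-(φ₀ + 2 * Real.log (Real.cosh (Real.sqrt (δ / 2) * Real.exp (-φ₀ / 2) * x))))) ∧
      deriv (fun y =>
          φ₀ + 2 * Real.log (Real.cosh (Real.sqrt (δ / 2) * Real.exp (-φ₀ / 2) * y))) 0 = 0 ∧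
      φ₀ + 2 * Real.log (Real.cosh (Real.sqrt (δ / 2) * Real.exp (-φ₀ / 2) * 1)) = 0 := by
  have no_root : ¬ ∃ φ₀ : ℝ, exp (-φ₀ / 2) = cosh (√(δ / 2) * exp (-φ₀ / 2)) := by
    rintro ⟨φ₀, hroot⟩
    have hlt := lt_sqrt_mul_cosh_of_critical_lt hδcpos.le hchar hδ (√(δ / 2) * exp (-φ₀ / 2))
    rw [← hroot] at hlt
    exact lt_irrefl _ hlt
  refine ⟨no_root, ?_⟩
  rintro ⟨φ₀, -, -, hbc⟩
  rw [mul_one] at hbc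
  refine no_root ⟨φ₀, ?_⟩
  calc exp (-φ₀ / 2) = exp (log (cosh (√(δ / 2) * exp (-φ₀ / 2)))) := by congr 1; linarith
    _ = cosh (√(δ / 2) * exp (-φ₀ / 2)) := exp_log (cosh_pos _)

theorem no_steady_state_above_critical (δ δc : ℝ) (hδcpos : 0 < δc)
    (hchar : 1 = Real.sqrt (δc / 2) * Real.sinh (Real.sqrt ((δc + 2) / 2)))
    (huniq : ∀ y : ℝ, 0 < y →
      1 = Real.sqrt (y / 2) * Real.sinh (Real.sqrt ((y + 2) / 2)) → y = δc)
    (hδ : δc < δ) :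
    (¬ ∃ φ₀ : ℝ, Real.exp (-φ₀ / 2) =
        Real.cosh (Real.sqrt (δ / 2) * Real.exp (-φ₀ / 2))) ∧
    ¬ ∃ φ₀ : ℝ,
      (∀ x : ℝ, deriv (deriv (fun y =>
          φ₀ + 2 * Real.log (Real.cosh (Real.sqrt (δ / 2) * Real.exp (-φ₀ / 2) * y)))) x =
        δ * Real.exp (-(φ₀ + 2 * Real.log (Real.cosh (Real.sqrt (δ / 2) * Real.exp (-φ₀ / 2) * x))))) ∧
      deriv (fun y =>
          φ₀ + 2 * Real.log (Real.cosh (Real.sqrt (δ / 2) * Real.exp (-φ₀ / 2) * y))) 0 = 0 ∧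
      φ₀ + 2 * Real.log (Real.cosh (Real.sqrt (δ / 2) * Real.exp (-φ₀ / 2) * 1)) = 0 :=
  no_steady_state_above_critical_general δ δc hδcpos hchar hδ
end

section
/- Let δ_c be the unique positive solution of 1 = √(x/2)·sinh(√((x+2)/2)), and for 0 < δ ≤ δ_c let φ₀(δ) denote any solution of e^{-φ₀/2} = cosh(√(δ/2)·e^{-φ₀/2}). Then the function g(δ, φ₀) = cosh(√(δ/2)·e^{-φ₀/2}) - e^{-φ₀/2} satisfies: for fixed φ₀, g is strictly increasing in δ; consequently if a solution exists for δ, then a solution exists for all δ' ∈ (0, δ]. -/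
/-!
For fixed `φ₀` the defect `g(δ, φ₀)` increases strictly with `δ`, since `cosh` increases on
`[0, ∞)`. So if `g(δ, φ₀) = 0` and `δ' ≤ δ`, then `g(δ', φ₀) ≤ 0`. On the other hand
`g(δ', φ) > 0` once `φ > 0`, because then `e^{-φ/2} < 1 ≤ cosh`. The intermediate value
theorem in `φ` gives a zero of `g(δ', ·)`.
-/

open Real Set

noncomputable def steadyStateDefect (d φ : ℝ) : ℝ :=
  cosh (√(d / 2) * exp (-φ / 2)) - exp (-φ / 2)

lemma steadyStateDefect_strictMonoOn (φ : ℝ) :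
    StrictMonoOn (steadyStateDefect · φ) (Ici 0) := by
  intro a ha b hb hab
  have hcosh : cosh (√(a / 2) * exp (-φ / 2)) < cosh (√(b / 2) * exp (-φ / 2)) :=
    cosh_strictMonoOn (mem_Ici.mpr (by positivity)) (mem_Ici.mpr (by positivity)) <|
      mul_lt_mul_of_pos_right (sqrt_lt_sqrt (by linarith [mem_Ici.mp ha]) (by linarith)) (exp_pos _)
  simpa only [steadyStateDefect] using sub_lt_sub_right hcosh _

lemma steadyStateDefect_pos {φ : ℝ} (hφ : 0 < φ) (d : ℝ) : 0 < steadyStateDefect d φ := by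
  have hexp : exp (-φ / 2) < 1 := exp_lt_one_iff.mpr (by linarith)
  have hcosh := one_le_cosh (√(d / 2) * exp (-φ / 2))
  rw [steadyStateDefect]
  linarith

lemma continuous_steadyStateDefect (d : ℝ) : Continuous (steadyStateDefect d) := by
  unfold steadyStateDefect
  fun_prop

lemma exists_steadyStateDefect_eq_zero {d φ₀ : ℝ} (h : steadyStateDefect d φ₀ ≤ 0) :
    ∃ φ, steadyStateDefect d φ = 0 := by
  obtain ⟨φ, -, hφ⟩ := intermediate_value_Icc (le_max_left φ₀ 1)
    (continuous_steadyStateDefect d).continuousOn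
    ⟨h, (steadyStateDefect_pos (lt_max_of_lt_right one_pos) d).le⟩
  exact ⟨φ, hφ⟩

theorem monotonicity_in_delta_general (δc : ℝ) :
    (∀ φ₀ : ℝ, StrictMonoOn
        (fun d : ℝ => Real.cosh (Real.sqrt (d / 2) * Real.exp (-φ₀ / 2)) - Real.exp (-φ₀ / 2))
        (Set.Ioi (0 : ℝ))) ∧
      ∀ δ : ℝ, 0 < δ → δ ≤ δc →
        (∃ φ₀ : ℝ, Real.exp (-φ₀ / 2) =
            Real.cosh (Real.sqrt (δ / 2) * Real.exp (-φ₀ / 2))) →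
        ∀ δ' : ℝ, 0 < δ' → δ' ≤ δ →
          ∃ φ₀ : ℝ, Real.exp (-φ₀ / 2) =
            Real.cosh (Real.sqrt (δ' / 2) * Real.exp (-φ₀ / 2)) := by
  refine ⟨fun φ₀ => (steadyStateDefect_strictMonoOn φ₀).mono Ioi_subset_Ici_self, ?_⟩
  rintro δ hδ - ⟨φ₀, hφ₀⟩ δ' hδ' hδ'δ
  have hzero : steadyStateDefect δ φ₀ = 0 := by
    rw [steadyStateDefect, ← hφ₀, sub_self]
  have hnonpos : steadyStateDefect δ' φ₀ ≤ 0 :=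
    hzero ▸ (steadyStateDefect_strictMonoOn φ₀).monotoneOn hδ'.le hδ.le hδ'δ
  obtain ⟨φ, hφ⟩ := exists_steadyStateDefect_eq_zero hnonpos
  exact ⟨φ, (sub_eq_zero.mp hφ).symm⟩

theorem monotonicity_in_delta (δc : ℝ) (hδcpos : 0 < δc)
    (hchar : 1 = Real.sqrt (δc / 2) * Real.sinh (Real.sqrt ((δc + 2) / 2)))
    (huniq : ∀ y : ℝ, 0 < y →
      1 = Real.sqrt (y / 2) * Real.sinh (Real.sqrt ((y + 2) / 2)) → y = δc) :
    (∀ φ₀ : ℝ, StrictMonoOn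
        (fun d : ℝ => Real.cosh (Real.sqrt (d / 2) * Real.exp (-φ₀ / 2)) - Real.exp (-φ₀ / 2))
        (Set.Ioi (0 : ℝ))) ∧
      ∀ δ : ℝ, 0 < δ → δ ≤ δc →
        (∃ φ₀ : ℝ, Real.exp (-φ₀ / 2) =
            Real.cosh (Real.sqrt (δ / 2) * Real.exp (-φ₀ / 2))) →
        ∀ δ' : ℝ, 0 < δ' → δ' ≤ δ →
          ∃ φ₀ : ℝ, Real.exp (-φ₀ / 2) =
            Real.cosh (Real.sqrt (δ' / 2) * Real.exp (-φ₀ / 2)) :=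
  monotonicity_in_delta_general δc
end
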